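/- Let β ∈ (0, 1/2) with β ≠ 1/3, set c = cos(2πβ), and let n ∈ ℕ. For every ω ∈ Ĩⁿ(β): (i) −1 < r_β(ω) < 0 and r_β(ω)² − g_β(ω)·r_β(ω) + 1 = 0; (ii) r_β((2n+1)π/L − ω) = r_β(ω); (iii) ω ↦ r_β(ω) is strictly increasing on (nπ/L + a(β)/L, ωₙ*] and strictly decreasing on [ωₙ*, (n+1)π/L − a(β)/L); consequently r_β(ω) ≤ r_β(ωₙ*) with equality if and only if ω = ωₙ*. -/

import Mathlib

open Real

/-- The edge length `L = 1/√3`. -/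
noncomputable def L : ℝ := 1 / Real.sqrt 3

/-- The Dirac frequency `ωₙ* = (2n+1)π/(2L)`. -/
noncomputable def ωstar (n : ℕ) : ℝ := (2 * n + 1) * π / (2 * L)

/-- `g_β(ω) = (9·cos²(ωL) − 3 − 2·cos(2πβ)) / √(2 + 2·cos(2πβ))`. -/
noncomputable def g (β ω : ℝ) : ℝ :=
  (9 * Real.cos (ω * L) ^ 2 - 3 - 2 * Real.cos (2 * π * β)) /
    Real.sqrt (2 + 2 * Real.cos (2 * π * β))

/-- `a(β) = arccos(√(3 + 2·cos(2πβ) − 2·√(2 + 2·cos(2πβ)))/3)`. -/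
noncomputable def aβ (β : ℝ) : ℝ :=
  Real.arccos (Real.sqrt (3 + 2 * Real.cos (2 * π * β) -
    2 * Real.sqrt (2 + 2 * Real.cos (2 * π * β))) / 3)

/-- The open interval `Ĩⁿ(β) = (nπ/L + a(β)/L, (n+1)π/L − a(β)/L)`. -/
noncomputable def Itilde (β : ℝ) (n : ℕ) : Set ℝ :=
  Set.Ioo (n * π / L + aβ β / L) ((n + 1) * π / L - aβ β / L)

/-- `r_β(ω) = (g_β(ω) + √(g_β(ω)² − 4))/2`. -/
noncomputable def r (β ω : ℝ) : ℝ := (g β ω + Real.sqrt (g β ω ^ 2 - 4)) / 2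

/-!
Put `θ = ωL` and `s = √(2 + 2 cos 2πβ)`, so that `g_β(ω) = (9 cos² θ − 1 − s²)/s` is an increasing
affine function of `cos² θ`, and `9 cos² a(β) = (s − 1)²`. Hence `g_β(ω) < −2` exactly when
`cos² θ < cos² a(β)`, which holds on `Ĩⁿ(β)`. There `r_β(ω)` is the larger root of `t² − g t + 1`,
which lies in `(−1, 0)` and decreases in `g`. Since `cos²` decreases on `[nπ, nπ + π/2]`, increases on
`[nπ + π/2, (n+1)π]` and is symmetric about `nπ + π/2 = ωₙ* L`, the function `r_β` increases,
then decreases, and is symmetric about `ωₙ*`.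
-/

open Set

/-- The larger root of `t² − x t + 1`, so that `r β ω = upperRoot (g β ω)`. -/
noncomputable def upperRoot (x : ℝ) : ℝ := (x + √(x ^ 2 - 4)) / 2

lemma upperRoot_sq_sub_mul_add_one {x : ℝ} (hx : 4 ≤ x ^ 2) :
    upperRoot x ^ 2 - x * upperRoot x + 1 = 0 := by
  have := Real.sq_sqrt (sub_nonneg.2 hx)
  unfold upperRoot
  linear_combination this / 4

lemma neg_one_lt_upperRoot {x : ℝ} (hx : x < -2) : -1 < upperRoot x := by
  have : -2 - x < √(x ^ 2 - 4) := (Real.lt_sqrt (by linarith)).2 (by nlinarith)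
  unfold upperRoot
  linarith

lemma upperRoot_neg {x : ℝ} (hx : x < 0) : upperRoot x < 0 := by
  have : √(x ^ 2 - 4) < -x := (Real.sqrt_lt' (by linarith)).2 (by nlinarith)
  unfold upperRoot
  linarith

lemma strictAntiOn_upperRoot : StrictAntiOn upperRoot (Iic (-2)) := by
  intro x hx y hy hxy
  simp only [mem_Iic] at hx hy
  set u := √(x ^ 2 - 4)
  set v := √(y ^ 2 - 4)
  have hu : u ^ 2 = x ^ 2 - 4 := Real.sq_sqrt (by nlinarith)
  have hv : v ^ 2 = y ^ 2 - 4 := Real.sq_sqrt (by nlinarith)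
  have hu_lt : u < -x := (Real.sqrt_lt' (by linarith)).2 (by nlinarith)
  have hv_lt : v < -y := (Real.sqrt_lt' (by linarith)).2 (by nlinarith)
  have hu_pos : 0 < u := Real.sqrt_pos.2 (by nlinarith)
  -- `u² − v² = (y − x)(−x − y)` while `0 < u + v < −x − y`, so `u − v > y − x`.
  have key : (y - x) * (u + v) < (u - v) * (u + v) := by
    rw [show (u - v) * (u + v) = (y - x) * (-x - y) by linear_combination hu - hv]
    exact mul_lt_mul_of_pos_left (by linarith) (by linarith)
  have := lt_of_mul_lt_mul_right key (by positivity)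
  unfold upperRoot
  linarith

lemma cos_sq_sub_int_mul_pi (x : ℝ) (n : ℤ) : Real.cos (x - n * π) ^ 2 = Real.cos x ^ 2 := by
  rw [Real.cos_sub_int_mul_pi, mul_pow, ← sq_abs ((-1 : ℝ) ^ n), abs_neg_one_zpow, one_pow, one_mul]

lemma cos_sq_int_mul_pi_sub (x : ℝ) (n : ℤ) : Real.cos (n * π - x) ^ 2 = Real.cos x ^ 2 := by
  rw [Real.cos_int_mul_pi_sub, mul_pow, ← sq_abs ((-1 : ℝ) ^ n), abs_neg_one_zpow, one_pow,
    one_mul]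

lemma strictAntiOn_cos_sq (n : ℤ) :
    StrictAntiOn (fun θ ↦ Real.cos θ ^ 2) (Icc (n * π) (n * π + π / 2)) := by
  intro x hx y hy hxy
  dsimp only
  rw [← cos_sq_sub_int_mul_pi x n, ← cos_sq_sub_int_mul_pi y n]
  have hπ := Real.pi_pos
  have hlt : Real.cos (y - n * π) < Real.cos (x - n * π) :=
    Real.strictAntiOn_cos ⟨by linarith [hx.1], by linarith [hx.2]⟩
      ⟨by linarith [hy.1], by linarith [hy.2]⟩ (by linarith)
  exact pow_lt_pow_left₀ hlt
    (Real.cos_nonneg_of_mem_Icc ⟨by linarith [hy.1], by linarith [hy.2]⟩) two_ne_zero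

lemma strictMonoOn_cos_sq (n : ℤ) :
    StrictMonoOn (fun θ ↦ Real.cos θ ^ 2) (Icc (n * π + π / 2) ((n + 1) * π)) := by
  intro x hx y hy hxy
  dsimp only
  have hcast : (((n + 1 : ℤ) : ℝ)) = n + 1 := by push_cast; ring
  rw [← cos_sq_int_mul_pi_sub x (n + 1), ← cos_sq_int_mul_pi_sub y (n + 1), hcast]
  have hπ := Real.pi_pos
  have hlt : Real.cos ((n + 1) * π - x) < Real.cos ((n + 1) * π - y) :=
    Real.strictAntiOn_cos ⟨by linarith [hy.2], by linarith [hy.1]⟩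
      ⟨by linarith [hx.2], by linarith [hx.1]⟩ (by linarith)
  exact pow_lt_pow_left₀ hlt
    (Real.cos_nonneg_of_mem_Icc ⟨by linarith [hx.2], by linarith [hx.1]⟩) two_ne_zero

lemma cos_sq_lt_cos_sq_of_mem_Ioo {a θ : ℝ} (n : ℤ) (ha : 0 ≤ a)
    (hθ : θ ∈ Ioo (n * π + a) ((n + 1) * π - a)) : Real.cos θ ^ 2 < Real.cos a ^ 2 := by
  obtain ⟨h₁, h₂⟩ := hθ
  rcases le_total θ (n * π + π / 2) with hle | hge
  · have := strictAntiOn_cos_sq n ⟨by linarith, by linarith⟩ ⟨by linarith, hle⟩ h₁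
    dsimp only at this
    rwa [← cos_sq_sub_int_mul_pi (n * π + a) n, add_sub_cancel_left] at this
  · have := strictMonoOn_cos_sq n ⟨hge, by linarith⟩ ⟨by linarith, by linarith⟩ h₂
    have hcast : (((n + 1 : ℤ) : ℝ)) = n + 1 := by push_cast; ring
    dsimp only at this
    rwa [← hcast, cos_sq_int_mul_pi_sub] at this

lemma StrictMonoOn.apply_le_and_eq_iff_of_strictAntiOn {f : ℝ → ℝ} {a m b x : ℝ}
    (hmono : StrictMonoOn f (Ioc a m)) (hanti : StrictAntiOn f (Ico m b)) (hx : x ∈ Ioo a b) :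
    f x ≤ f m ∧ (f x = f m ↔ x = m) := by
  rcases lt_trichotomy x m with h | rfl | h
  · have := hmono ⟨hx.1, h.le⟩ ⟨hx.1.trans h, le_rfl⟩ h
    exact ⟨this.le, iff_of_false this.ne h.ne⟩
  · simp
  · have := hanti ⟨le_rfl, h.trans hx.2⟩ ⟨h.le, hx.2⟩ h
    exact ⟨this.le, iff_of_false this.ne h.ne'⟩

lemma L_pos : 0 < L := by
  unfold L
  positivity

lemma ωstar_eq (n : ℕ) : ωstar n = (n * π + π / 2) / L := by
  unfold ωstar
  field_simp [L_pos.ne']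

lemma neg_one_lt_cos_two_pi_mul {β : ℝ} (hβ0 : 0 < β) (hβ1 : β < 1 / 2) :
    -1 < Real.cos (2 * π * β) := by
  have hπ := Real.pi_pos
  rw [← Real.cos_pi]
  exact Real.strictAntiOn_cos ⟨by positivity, by nlinarith⟩ ⟨hπ.le, le_rfl⟩ (by nlinarith)

lemma aβ_nonneg (β : ℝ) : 0 ≤ aβ β := Real.arccos_nonneg _

lemma aβ_le_pi_div_two (β : ℝ) : aβ β ≤ π / 2 := Real.arccos_le_pi_div_two.2 (by positivity)

lemma nine_mul_cos_aβ_sq (β : ℝ) :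
    9 * Real.cos (aβ β) ^ 2 =
      3 + 2 * Real.cos (2 * π * β) - 2 * √(2 + 2 * Real.cos (2 * π * β)) := by
  set c := Real.cos (2 * π * β)
  have hc : 0 ≤ 2 + 2 * c := by linarith [Real.neg_one_le_cos (2 * π * β)]
  have hs := Real.sq_sqrt hc
  have hd : 0 ≤ 3 + 2 * c - 2 * √(2 + 2 * c) := by nlinarith [sq_nonneg (√(2 + 2 * c) - 1)]
  have hd9 : 3 + 2 * c - 2 * √(2 + 2 * c) ≤ 9 := by
    linarith [Real.cos_le_one (2 * π * β), Real.sqrt_nonneg (2 + 2 * c)]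
  have h3 : √(3 + 2 * c - 2 * √(2 + 2 * c)) ≤ 3 := Real.sqrt_le_iff.2 ⟨by norm_num, by linarith⟩
  rw [aβ, Real.cos_arccos (by linarith [Real.sqrt_nonneg (3 + 2 * c - 2 * √(2 + 2 * c))])
    (by linarith), div_pow, Real.sq_sqrt hd]
  ring

lemma r_odd_mul_pi_div_L_sub (β : ℝ) (n : ℕ) (ω : ℝ) :
    r β ((2 * n + 1) * π / L - ω) = r β ω := by
  have hg : g β ((2 * n + 1) * π / L - ω) = g β ω := by
    have harg : ((2 * n + 1) * π / L - ω) * L = ((2 * n + 1 : ℤ) : ℝ) * π - ω * L := by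
      push_cast
      field_simp [L_pos.ne']
    rw [g, g, harg, cos_sq_int_mul_pi_sub]
  rw [r, r, hg]

section

variable {β : ℝ}

lemma g_lt_g_of_cos_sq_lt (hc : -1 < Real.cos (2 * π * β)) {ω₁ ω₂ : ℝ}
    (h : Real.cos (ω₁ * L) ^ 2 < Real.cos (ω₂ * L) ^ 2) : g β ω₁ < g β ω₂ := by
  unfold g
  gcongr ?_ / _
  · exact Real.sqrt_pos.2 (by linarith)
  · linarith

lemma g_lt_neg_two_of_cos_sq_lt (hc : -1 < Real.cos (2 * π * β)) {ω : ℝ}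
    (h : Real.cos (ω * L) ^ 2 < Real.cos (aβ β) ^ 2) : g β ω < -2 := by
  rw [g, div_lt_iff₀ (Real.sqrt_pos.2 (by linarith))]
  linarith [nine_mul_cos_aβ_sq β]

lemma g_lt_neg_two_of_mem_Itilde (hc : -1 < Real.cos (2 * π * β)) {n : ℕ} {ω : ℝ}
    (hω : ω ∈ Itilde β n) : g β ω < -2 := by
  obtain ⟨h₁, h₂⟩ := hω
  rw [← add_div, div_lt_iff₀ L_pos] at h₁
  rw [← sub_div, lt_div_iff₀ L_pos] at h₂
  refine g_lt_neg_two_of_cos_sq_lt hc (cos_sq_lt_cos_sq_of_mem_Ioo n (aβ_nonneg β) ?_)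
  simpa using And.intro h₁ h₂

lemma strictMonoOn_r (hc : -1 < Real.cos (2 * π * β)) (n : ℕ) :
    StrictMonoOn (r β) (Ioc (n * π / L + aβ β / L) (ωstar n)) := by
  rintro ω₁ ⟨h₁, -⟩ ω₂ ⟨-, h₂⟩ h
  rw [← add_div, div_lt_iff₀ L_pos] at h₁
  rw [ωstar_eq, le_div_iff₀ L_pos] at h₂
  have hθ := mul_lt_mul_of_pos_right h L_pos
  have ha₀ := aβ_nonneg β
  have ha := aβ_le_pi_div_two β
  have hcos : Real.cos (ω₂ * L) ^ 2 < Real.cos (ω₁ * L) ^ 2 := by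
    refine strictAntiOn_cos_sq n ?_ ?_ hθ <;> constructor <;> push_cast <;> linarith
  have hg₁ : g β ω₁ < -2 := g_lt_neg_two_of_cos_sq_lt hc
    (cos_sq_lt_cos_sq_of_mem_Ioo n ha₀ (by constructor <;> push_cast <;> linarith))
  have hg := g_lt_g_of_cos_sq_lt hc hcos
  exact strictAntiOn_upperRoot (mem_Iic.2 (by linarith)) (mem_Iic.2 hg₁.le) hg

lemma strictAntiOn_r (hc : -1 < Real.cos (2 * π * β)) (n : ℕ) :
    StrictAntiOn (r β) (Ico (ωstar n) ((n + 1) * π / L - aβ β / L)) := by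
  rintro ω₁ ⟨h₁, -⟩ ω₂ ⟨-, h₂⟩ h
  rw [ωstar_eq, div_le_iff₀ L_pos] at h₁
  rw [← sub_div, lt_div_iff₀ L_pos] at h₂
  have hθ := mul_lt_mul_of_pos_right h L_pos
  have ha₀ := aβ_nonneg β
  have ha := aβ_le_pi_div_two β
  have hcos : Real.cos (ω₁ * L) ^ 2 < Real.cos (ω₂ * L) ^ 2 := by
    refine strictMonoOn_cos_sq n ?_ ?_ hθ <;> constructor <;> push_cast <;> linarith
  have hg₂ : g β ω₂ < -2 := g_lt_neg_two_of_cos_sq_lt hc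
    (cos_sq_lt_cos_sq_of_mem_Ioo n ha₀ (by constructor <;> push_cast <;> linarith))
  have hg := g_lt_g_of_cos_sq_lt hc hcos
  exact strictAntiOn_upperRoot (mem_Iic.2 (by linarith)) (mem_Iic.2 hg₂.le) hg

end

theorem stmt_12_general (β : ℝ) (hβ0 : 0 < β) (hβ1 : β < 1 / 2) (n : ℕ) :
    (∀ ω ∈ Itilde β n,
      (-1 < r β ω ∧ r β ω < 0) ∧ r β ω ^ 2 - g β ω * r β ω + 1 = 0) ∧
    (∀ ω ∈ Itilde β n, r β ((2 * n + 1) * π / L - ω) = r β ω) ∧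
    StrictMonoOn (r β) (Set.Ioc (n * π / L + aβ β / L) (ωstar n)) ∧
    StrictAntiOn (r β) (Set.Ico (ωstar n) ((n + 1) * π / L - aβ β / L)) ∧
    (∀ ω ∈ Itilde β n, r β ω ≤ r β (ωstar n) ∧ (r β ω = r β (ωstar n) ↔ ω = ωstar n)) := by
  have hc := neg_one_lt_cos_two_pi_mul hβ0 hβ1
  have hmono := strictMonoOn_r hc n
  have hanti := strictAntiOn_r hc n
  refine ⟨fun ω hω ↦ ?_, fun ω _ ↦ r_odd_mul_pi_div_L_sub β n ω, hmono, hanti,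
    fun ω hω ↦ hmono.apply_le_and_eq_iff_of_strictAntiOn hanti hω⟩
  have hg := g_lt_neg_two_of_mem_Itilde hc hω
  exact ⟨⟨neg_one_lt_upperRoot hg, upperRoot_neg (by linarith)⟩,
    upperRoot_sq_sub_mul_add_one (by nlinarith)⟩

theorem stmt_12 (β : ℝ) (hβ0 : 0 < β) (hβ1 : β < 1 / 2) (hβ3 : β ≠ 1 / 3) (n : ℕ) :
    (∀ ω ∈ Itilde β n,
      (-1 < r β ω ∧ r β ω < 0) ∧ r β ω ^ 2 - g β ω * r β ω + 1 = 0) ∧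
    (∀ ω ∈ Itilde β n, r β ((2 * n + 1) * π / L - ω) = r β ω) ∧
    StrictMonoOn (r β) (Set.Ioc (n * π / L + aβ β / L) (ωstar n)) ∧
    StrictAntiOn (r β) (Set.Ico (ωstar n) ((n + 1) * π / L - aβ β / L)) ∧
    (∀ ω ∈ Itilde β n, r β ω ≤ r β (ωstar n) ∧ (r β ω = r β (ωstar n) ↔ ω = ωstar n)) :=
  stmt_12_general β hβ0 hβ1 n
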